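/- For the E_7 plane curve singularity g = y_1³ + y_1 y_2³, the first Hessian number is χ_1(g) = 2. -/

import Mathlib

open MvPolynomial

/-- The Hessian matrix of second order partial derivatives of `g`. -/
noncomputable def hessianMatrix {m : ℕ} (g : MvPolynomial (Fin m) ℂ) :
    Matrix (Fin m) (Fin m) (MvPolynomial (Fin m) ℂ) :=
  Matrix.of fun i j => pderiv i (pderiv j g)

/-- The ideal generated by all `k × k` minors of a square matrix.  (Minors coming
from repeated rows or columns vanish, so in particular for `k > m` this ideal is
zero, matching the convention `h_{n+1}(g) = 0`.) -/
noncomputable def minorsIdeal {m : ℕ} {R : Type*} [CommRing R]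
    (M : Matrix (Fin m) (Fin m) R) (k : ℕ) : Ideal R :=
  Ideal.span {x | ∃ r c : Fin k → Fin m, x = (M.submatrix r c).det}

/-- The Jacobian ideal of `g`, generated by its first order partial derivatives. -/
noncomputable def jacobianIdeal {m : ℕ} (g : MvPolynomial (Fin m) ℂ) :
    Ideal (MvPolynomial (Fin m) ℂ) :=
  Ideal.span (Set.range fun i => pderiv i g)

/-- The `k`-th Hessian number `χ_k(g) = dim_ℂ 𝒪/((g) + J_g + h_k(g))` of a
singularity `g = 0` (computed in the polynomial ring). -/
noncomputable def chi {m : ℕ} (g : MvPolynomial (Fin m) ℂ) (k : ℕ) : ℕ :=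
  Module.finrank ℂ (MvPolynomial (Fin m) ℂ ⧸
    (Ideal.span {g} ⊔ jacobianIdeal g ⊔ minorsIdeal (hessianMatrix g) k))

private lemma pd3 (i : Fin 2) : pderiv i (3 : MvPolynomial (Fin 2) ℂ) = 0 := by
  rw [show (3 : MvPolynomial (Fin 2) ℂ) = C 3 from (map_ofNat C 3).symm]; simp


private lemma coeff_of_mem_J {p : MvPolynomial (Fin 2) ℂ}
    (h : p ∈ Ideal.span {(X 0 : MvPolynomial (Fin 2) ℂ), X 1 ^ 2}) :
    coeff 0 p = 0 ∧ coeff (Finsupp.single 1 1) p = 0 := by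
  rw [Ideal.mem_span_pair] at h
  obtain ⟨a, b, rfl⟩ := h
  constructor
  · rw [← constantCoeff_eq]; simp
  · rw [show b * X 1 ^ 2 = b * X 1 * X 1 by ring, coeff_add, coeff_mul_X', coeff_mul_X']
    simp [← constantCoeff_eq]


private lemma finrank_quot :
    Module.finrank ℂ (MvPolynomial (Fin 2) ℂ ⧸
      Ideal.span {(X 0 : MvPolynomial (Fin 2) ℂ), X 1 ^ 2}) = 2 := by
  set J : Ideal (MvPolynomial (Fin 2) ℂ) := Ideal.span {X 0, X 1 ^ 2} with hJ
  set mk := Ideal.Quotient.mk J with hmk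
  have hX0 : mk (X 0) = 0 := Ideal.Quotient.eq_zero_iff_mem.mpr
    (Ideal.subset_span (by simp))
  have hX1sq : mk (X 1 ^ 2) = 0 := Ideal.Quotient.eq_zero_iff_mem.mpr
    (Ideal.subset_span (by simp))
  have hsmul : ∀ (s : ℂ) (p : MvPolynomial (Fin 2) ℂ), s • mk p = mk (C s * p) := by
    intro s p
    have h1 : s • mk p = mk (s • p) := rfl
    rw [h1, smul_eq_C_mul]
  -- spanning
  have hspan : ∀ p : MvPolynomial (Fin 2) ℂ,
      mk p ∈ Submodule.span ℂ {mk 1, mk (X 1)} := by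
    intro p
    induction p using MvPolynomial.induction_on with
    | C a =>
      have : mk (C a) = a • mk 1 := by rw [hsmul, mul_one]
      rw [this]
      exact Submodule.smul_mem _ _ (Submodule.subset_span (by simp))
    | add p q hp hq => rw [map_add]; exact Submodule.add_mem _ hp hq
    | mul_X p i hp =>
      fin_cases i
      · show mk (p * X (0 : Fin 2)) ∈ _
        rw [map_mul, hX0, mul_zero]
        exact Submodule.zero_mem _
      · show mk (p * X (1 : Fin 2)) ∈ _
        rw [Submodule.mem_span_pair] at hp
        obtain ⟨a, b, hab⟩ := hp
        rw [map_mul, ← hab]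
        have key : (a • mk 1 + b • mk (X 1)) * mk (X (1 : Fin 2))
            = a • mk (X 1) + b • mk (X 1 ^ 2) := by
          rw [hsmul, hsmul, hsmul, hsmul, ← map_add, ← map_mul, ← map_add]
          congr 1; ring
        rw [key, hX1sq, smul_zero, add_zero]
        exact Submodule.smul_mem _ _ (Submodule.subset_span (by simp))
  -- independence
  have hli : LinearIndependent ℂ ![mk 1, mk (X 1)] := by
    rw [LinearIndependent.pair_iff]
    intro s t hst
    have h2 : mk (C s + C t * X 1) = 0 := by
      have : s • mk 1 + t • mk (X 1) = mk (C s + C t * X 1) := by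
        rw [hsmul, hsmul, ← map_add]; congr 1; ring
      rw [← this]; exact hst
    have h3 := coeff_of_mem_J (Ideal.Quotient.eq_zero_iff_mem.mp h2)
    have hs : coeff (0 : Fin 2 →₀ ℕ) (C s + C t * X 1) = s := by
      simp [coeff_X', Finsupp.single_eq_zero, eq_comm]
    have ht : coeff (Finsupp.single (1 : Fin 2) 1) (C s + C t * X 1) = t := by
      simp [coeff_X', coeff_C, Finsupp.single_eq_zero, eq_comm]
    constructor
    · rw [← hs]; exact h3.1
    · rw [← ht]; exact h3.2
  -- basis
  have hrange : Set.range ![mk 1, mk (X 1)] = {mk 1, mk (X 1)} := by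
    ext y; simp [Fin.exists_fin_two, eq_comm]; tauto
  have hsp : ⊤ ≤ Submodule.span ℂ (Set.range ![mk 1, mk (X 1)]) := by
    rw [hrange]
    intro x _
    obtain ⟨p, rfl⟩ := Ideal.Quotient.mk_surjective x
    exact hspan p
  let b : Module.Basis (Fin 2) ℂ (MvPolynomial (Fin 2) ℂ ⧸ J) := Module.Basis.mk hli hsp
  rw [Module.finrank_eq_card_basis b, Fintype.card_fin]

private lemma ideal_eq :
    Ideal.span {(X 0 : MvPolynomial (Fin 2) ℂ) ^ 3 + X 0 * X 1 ^ 3}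
      ⊔ jacobianIdeal ((X 0 : MvPolynomial (Fin 2) ℂ) ^ 3 + X 0 * X 1 ^ 3)
      ⊔ minorsIdeal (hessianMatrix ((X 0 : MvPolynomial (Fin 2) ℂ) ^ 3 + X 0 * X 1 ^ 3)) 1
    = Ideal.span {(X 0 : MvPolynomial (Fin 2) ℂ), X 1 ^ 2} := by
  set g : MvPolynomial (Fin 2) ℂ := X 0 ^ 3 + X 0 * X 1 ^ 3 with hg
  have e00 : pderiv 0 (pderiv 0 g) = 6 * X 0 := by simp [hg, pderiv_X, pd3]; ring
  have e01 : pderiv 0 (pderiv 1 g) = 3 * X 1 ^ 2 := by simp [hg, pderiv_X, pd3]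
  have e10 : pderiv 1 (pderiv 0 g) = 3 * X 1 ^ 2 := by simp [hg, pderiv_X, pd3]
  have e11 : pderiv 1 (pderiv 1 g) = 6 * (X 0 * X 1) := by simp [hg, pderiv_X, pd3]; ring
  have ep0 : pderiv 0 g = 3 * X 0 ^ 2 + X 1 ^ 3 := by simp [hg, pderiv_X]
  have ep1 : pderiv 1 g = 3 * (X 0 * X 1 ^ 2) := by simp [hg, pderiv_X]; ring
  apply le_antisymm
  · apply sup_le (sup_le ?_ ?_) ?_
    · rw [Ideal.span_le, Set.singleton_subset_iff]
      rw [SetLike.mem_coe, Ideal.mem_span_pair]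
      exact ⟨X 0 ^ 2, X 0 * X 1, by ring⟩
    · rw [jacobianIdeal, Ideal.span_le]
      rintro x ⟨i, rfl⟩
      rw [SetLike.mem_coe, Ideal.mem_span_pair]
      fin_cases i
      · exact ⟨3 * X 0, X 1, by show _ = pderiv (0 : Fin 2) g; rw [ep0]; ring⟩
      · exact ⟨3 * X 1 ^ 2, 0, by show _ = pderiv (1 : Fin 2) g; rw [ep1]; ring⟩
    · rw [minorsIdeal, Ideal.span_le]
      rintro x ⟨r, c, rfl⟩
      rw [SetLike.mem_coe, Ideal.mem_span_pair]
      rw [Matrix.det_fin_one]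
      show ∃ a b, _ = hessianMatrix g (r 0) (c 0)
      generalize r 0 = i; generalize c 0 = j
      fin_cases i <;> fin_cases j <;>
        simp only [hessianMatrix, Matrix.of_apply] <;>
        [exact ⟨6, 0, by show _ = pderiv (0:Fin 2) (pderiv (0:Fin 2) g); rw [e00]; ring⟩;
         exact ⟨0, 3, by show _ = pderiv (0:Fin 2) (pderiv (1:Fin 2) g); rw [e01]; ring⟩;
         exact ⟨0, 3, by show _ = pderiv (1:Fin 2) (pderiv (0:Fin 2) g); rw [e10]; ring⟩;
         exact ⟨6 * X 1, 0, by show _ = pderiv (1:Fin 2) (pderiv (1:Fin 2) g); rw [e11]; ring⟩]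
  · rw [Ideal.span_le]
    have hmem : ∀ i j : Fin 2, pderiv i (pderiv j g) ∈
        Ideal.span {g} ⊔ jacobianIdeal g ⊔ minorsIdeal (hessianMatrix g) 1 := by
      intro i j
      refine le_sup_right (α := Ideal (MvPolynomial (Fin 2) ℂ)) ?_
      refine Ideal.subset_span ⟨fun _ => i, fun _ => j, ?_⟩
      rw [Matrix.det_fin_one]; rfl
    rintro x (rfl | rfl)
    · have := hmem 0 0
      rw [e00] at this
      have h6 : (X 0 : MvPolynomial (Fin 2) ℂ) = C (6⁻¹ : ℂ) * (6 * X 0) := by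
        rw [show ((6 : MvPolynomial (Fin 2) ℂ)) = C 6 from (map_ofNat C 6).symm,
          ← mul_assoc, ← map_mul]
        norm_num
      rw [SetLike.mem_coe, h6]
      exact Ideal.mul_mem_left _ _ this
    · have := hmem 0 1
      rw [e01] at this
      have h3 : (X 1 : MvPolynomial (Fin 2) ℂ) ^ 2 = C (3⁻¹ : ℂ) * (3 * X 1 ^ 2) := by
        rw [show ((3 : MvPolynomial (Fin 2) ℂ)) = C 3 from (map_ofNat C 3).symm,
          ← mul_assoc, ← map_mul]
        norm_num
      rw [SetLike.mem_coe, h3]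
      exact Ideal.mul_mem_left _ _ this

/-- For the `E₇` singularity `g = y₁³ + y₁y₂³`, one has `χ₁(g) = 2`. -/
theorem chi_one_of_E7 :
    chi ((X 0 : MvPolynomial (Fin 2) ℂ) ^ 3 + X 0 * X 1 ^ 3) 1 = 2 := by
  unfold chi
  rw [ideal_eq]
  exact finrank_quot
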